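/- arXiv:2506.11554 — 2 statements merged into one kernel-verified Lean document; each statement's English description precedes it below -/
import Mathlib

section
/- Let P, Q ∈ ℤ with P·Q ≠ 0 and let p be a prime with p ∣ P and p ∣ Q. Set a = ν_p(P) and b = ν_p(Q), and suppose b > 2a. Then for every integer r ≥ 1, L(P,Q,p^{−r}) = S_{⌈(r+a)/a⌉} = {0} ∪ {n ∈ ℕ : n ≥ ⌈r/a⌉ + 1}. -/
/-- The Lucas sequence `U_n(P,Q)`: `U_0 = 0`, `U_1 = 1`,
`U_{n+2} = P·U_{n+1} − Q·U_n`. -/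
def lucasU (P Q : ℤ) : ℕ → ℤ
  | 0 => 0
  | 1 => 1
  | n + 2 => P * lucasU P Q (n + 1) - Q * lucasU P Q n

/-- The Lucas semigroup `L(P,Q,R) = {n ∈ ℕ : U_n(P,Q)·R ∈ ℤ}`. -/
def lucasSG (P Q : ℤ) (R : ℚ) : Set ℕ :=
  {n : ℕ | ∃ k : ℤ, (lucasU P Q n : ℚ) * R = (k : ℚ)}

/-- The local Lucas semigroup `L(P,Q,p^{-r}) = {n ∈ ℕ : ν_p(U_n) ≥ r}`,
equivalently the set of `n` with `U_n · p^{-r} ∈ ℤ`. -/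
def localLucasSG (P Q : ℤ) (p : ℕ) (r : ℤ) : Set ℕ :=
  lucasSG P Q ((p : ℚ) ^ (-r))

/-- Ceiling of the quotient `r / a` of natural numbers. -/
def ceilDivNat (r a : ℕ) : ℕ := (⌈(r : ℚ) / (a : ℚ)⌉).toNat

/-- The ordinary ("tail") semigroup `S_m = {0} ∪ {n ∈ ℕ : n ≥ m}`. -/
def tailSG (m : ℕ) : Set ℕ := {n : ℕ | n = 0 ∨ m ≤ n}

/-- Exact factorization of a nonzero integer by its p-adic valuation. -/
lemma exact_factor (p : ℕ) (hp : p.Prime) (z : ℤ) (hz : z ≠ 0) :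
    ∃ u : ℤ, z = (p : ℤ) ^ padicValInt p z * u ∧ ¬ (p : ℤ) ∣ u := by
  haveI : Fact p.Prime := ⟨hp⟩
  obtain ⟨u, hu⟩ := padicValInt_dvd (p := p) z
  refine ⟨u, hu, fun hdvd => ?_⟩
  obtain ⟨v, hv⟩ := hdvd
  have : (p : ℤ) ^ (padicValInt p z + 1) ∣ z := by
    refine ⟨v, ?_⟩
    conv_lhs => rw [hu, hv]
    ring
  rw [padicValInt_dvd_iff] at this
  rcases this with h | h
  · exact hz h
  · omega

/-- membership criterion. -/
lemma mem_localLucasSG_iff (P Q : ℤ) (p : ℕ) (hp : p.Prime) (r : ℕ) (n : ℕ) :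
    n ∈ localLucasSG P Q p (r : ℤ) ↔ (p : ℤ) ^ r ∣ lucasU P Q n := by
  have hpq : ((p : ℚ)) ^ r ≠ 0 :=
    pow_ne_zero _ (Nat.cast_ne_zero.mpr hp.ne_zero)
  constructor
  · rintro ⟨k, hk⟩
    refine ⟨k, ?_⟩
    have : (lucasU P Q n : ℚ) = (p : ℚ) ^ r * (k : ℚ) := by
      rw [zpow_neg, zpow_natCast] at hk
      field_simp at hk
      linarith [hk]
    exact_mod_cast this
  · rintro ⟨k, hk⟩
    refine ⟨k, ?_⟩
    rw [zpow_neg, zpow_natCast, hk]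
    push_cast
    field_simp

/-- Special prime, case `b > 2a` (with `a = ν_p(P)`, `b = ν_p(Q)`):
`L(P,Q,p^{-r}) = S_{⌈(r+a)/a⌉} = {0} ∪ {n : n ≥ ⌈r/a⌉ + 1}`. -/
theorem localLucasSG_special_case_b_gt_two_a (P Q : ℤ) (hPQ : P * Q ≠ 0)
    (p : ℕ) (hp : p.Prime) (hpP : (p : ℤ) ∣ P) (hpQ : (p : ℤ) ∣ Q)
    (hb : 2 * padicValInt p P < padicValInt p Q) (r : ℕ) (hr : 1 ≤ r) :
    localLucasSG P Q p (r : ℤ) =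
        tailSG (ceilDivNat (r + padicValInt p P) (padicValInt p P)) ∧
      localLucasSG P Q p (r : ℤ) =
        {n : ℕ | n = 0 ∨ ceilDivNat r (padicValInt p P) + 1 ≤ n} := by
  haveI : Fact p.Prime := ⟨hp⟩
  set a := padicValInt p P with ha
  set b := padicValInt p Q with hbdef
  have hP : P ≠ 0 := fun h => hPQ (by simp [h])
  have hQ : Q ≠ 0 := fun h => hPQ (by simp [h])
  have ha1 : 1 ≤ a := by
    have h1 : (p : ℤ) ^ 1 ∣ P := by simpa using hpP
    rcases (padicValInt_dvd_iff 1 P).mp h1 with h' | h'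
    · exact absurd h' hP
    · exact h'
  -- exact valuation of U_{n+1}
  obtain ⟨uP, huP, huPnd⟩ := exact_factor p hp P hP
  obtain ⟨uQ, huQ, huQnd⟩ := exact_factor p hp Q hQ
  have key : ∀ n : ℕ, ∃ u : ℤ, lucasU P Q (n + 1) = (p : ℤ) ^ (n * a) * u ∧ ¬ (p : ℤ) ∣ u := by
    intro n
    induction n using Nat.twoStepInduction with
    | zero =>
      refine ⟨1, by simp [lucasU], fun h => ?_⟩
      exact (Nat.prime_iff_prime_int.mp hp).not_dvd_one h
    | one =>
      refine ⟨uP, ?_, huPnd⟩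
      have h2 : lucasU P Q 2 = P := by simp [lucasU]
      rw [h2, one_mul]
      exact huP
    | more n ih0 ih1 =>
      obtain ⟨u0, hu0, hu0nd⟩ := ih0
      obtain ⟨u1, hu1, hu1nd⟩ := ih1
      refine ⟨uP * u1 - (p : ℤ) ^ (b - 2 * a) * uQ * u0, ?_, ?_⟩
      · show P * lucasU P Q (n + 1 + 1) - Q * lucasU P Q (n + 1) = _
        rw [← ha] at huP
        rw [← hbdef] at huQ
        rw [hu1, hu0]
        conv_lhs => rw [huP, huQ]
        have hpow : ∀ k : ℕ, (p : ℤ) ^ (k * a) = ((p : ℤ) ^ a) ^ k := fun k => by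
          rw [mul_comm, pow_mul]
        have h1 : (p : ℤ) ^ b = ((p : ℤ) ^ a) ^ 2 * (p : ℤ) ^ (b - 2 * a) := by
          rw [← pow_mul, ← pow_add]
          congr 1
          omega
        rw [hpow, hpow, hpow, h1]
        ring
      · intro hdvd
        have h2 : (p : ℤ) ∣ (p : ℤ) ^ (b - 2 * a) * uQ * u0 :=
          ((dvd_pow_self (p : ℤ) (by omega : b - 2 * a ≠ 0)).mul_right uQ).mul_right u0
        have : (p : ℤ) ∣ uP * u1 := by
          have := dvd_add hdvd h2
          simpa using this
        rcases (Nat.prime_iff_prime_int.mp hp).dvd_mul.mp this with h | h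
        · exact huPnd h
        · exact hu1nd h
  -- membership for positive indices
  have mem_iff : ∀ m : ℕ, (m + 1) ∈ localLucasSG P Q p (r : ℤ) ↔ r ≤ m * a := by
    intro m
    rw [mem_localLucasSG_iff P Q p hp]
    obtain ⟨u, hu, hund⟩ := key m
    have hu0 : u ≠ 0 := fun h => hund (h ▸ dvd_zero _)
    have hU0 : lucasU P Q (m + 1) ≠ 0 := by
      rw [hu]
      exact mul_ne_zero (pow_ne_zero _ (by exact_mod_cast hp.ne_zero)) hu0
    rw [hu, padicValInt_dvd_iff]
    have hval : padicValInt p ((p : ℤ) ^ (m * a) * u) = m * a := by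
      rw [padicValInt.mul (pow_ne_zero _ (by exact_mod_cast hp.ne_zero)) hu0,
        padicValInt.eq_zero_of_not_dvd hund, add_zero]
      have : padicValInt p ((p : ℤ) ^ (m * a)) = padicValNat p (p ^ (m * a)) := by
        rw [padicValInt]
        congr 1
      rw [this, padicValNat.prime_pow]
    rw [hval]
    constructor
    · rintro (h | h)
      · exact absurd (hu ▸ h) hU0
      · exact h
    · exact Or.inr
  have hzero : (0 : ℕ) ∈ localLucasSG P Q p (r : ℤ) := ⟨0, by simp [lucasU]⟩
  -- ceiling arithmetic
  have hceil : ∀ m : ℕ, ceilDivNat r a ≤ m ↔ r ≤ m * a := by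
    intro m
    rw [ceilDivNat, Int.toNat_le, Int.ceil_le]
    rw [div_le_iff₀ (by exact_mod_cast ha1 : (0:ℚ) < a)]
    constructor
    · intro h; exact_mod_cast h
    · intro h; exact_mod_cast h
  have hset : localLucasSG P Q p (r : ℤ) = {n : ℕ | n = 0 ∨ ceilDivNat r a + 1 ≤ n} := by
    ext n
    rcases n with _ | m
    · simp [hzero]
    · simp only [Set.mem_setOf_eq, Nat.succ_ne_zero, false_or]
      rw [mem_iff m]
      rw [Nat.add_le_add_iff_right, hceil]
  have hceil2 : ceilDivNat (r + a) a = ceilDivNat r a + 1 := by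
    rw [ceilDivNat, ceilDivNat]
    have haQ : (a : ℚ) ≠ 0 := by exact_mod_cast (by omega : a ≠ 0)
    have : ((r + a : ℕ) : ℚ) / (a : ℚ) = (r : ℚ) / (a : ℚ) + 1 := by
      push_cast
      field_simp
    rw [this, Int.ceil_add_one]
    have h1 : (0 : ℤ) ≤ ⌈(r : ℚ) / (a : ℚ)⌉ := by
      apply Int.ceil_nonneg
      positivity
    omega
  refine ⟨?_, hset⟩
  rw [hset, tailSG, hceil2]
end

section
/- Let P, Q ∈ ℤ and R ∈ ℚ, and suppose the Lucas semigroup S = L(P,Q,R) has finite complement in ℕ (i.e., S is a numerical semigroup). Then either s(S) = ∅ or gcd s(S) ≥ 2, i.e., either S has no nonzero small elements or there is an integer d ≥ 2 dividing every nonzero small element of S. Consequently, any numerical semigroup S with s(S) ≠ ∅ and gcd s(S) = 1 is not the exponent semigroup of any 2×2 rational matrix. -/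
/-- The Frobenius number of `S ⊆ ℕ`: the largest natural number not in `S`
(for a numerical semigroup, `Sᶜ` is finite and nonempty so `sSup` is it). -/
noncomputable def frobNum (S : Set ℕ) : ℕ := sSup Sᶜ

/-- The set of nonzero small elements `s(S) = {n ∈ S : 0 < n < g(S)}`. -/
def smallElems (S : Set ℕ) : Set ℕ := {n : ℕ | n ∈ S ∧ 0 < n ∧ n < frobNum S}

/-- The exponent semigroup `S(A) = {n ∈ ℕ : A^n has all integer entries}`. -/
def expSG {d : ℕ} (A : Matrix (Fin d) (Fin d) ℚ) : Set ℕ :=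
  {n : ℕ | ∀ i j, ∃ k : ℤ, (A ^ n) i j = (k : ℚ)}

/-!
For a prime power `p ^ v`, write `P = p ^ a P'` and `Q = p ^ (2a) Q'` with `a` maximal. Then
`U (n + 1) = p ^ (n a) U' (n + 1)`, so the power of `p` that `U' n` must carry for `p ^ v ∣ U n`
decreases with `n`. Below an index `g` where it is not carried, all `n > 0` with `p ^ v ∣ U n`
are multiples of one `d ≥ 2`: if `p ∤ Q'`, d'Ocagne's identity makes the indices where a fixed
power of `p` divides `U'` closed under subtraction, so they are the multiples of a rank of
apparition; if `p ∣ Q'` and `p ∤ P'`, no `U' (n + 1)` is divisible by `p`; and if `p ∣ P'` and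
`p ∥ Q'`, then `p ^ m` exactly divides `U' (2m + 1)` while `p ^ (n / 2) ∣ U' n`, so `d = 2`.
As `L(P, Q, R) = {n | den R ∣ U n}`, it remains to pick a prime power of `den R` that does not
divide `U` at the Frobenius number.

If some power `A ^ N`, `N ≥ 1`, is integral, then `det A ∈ ℤ`, and `tr A ∈ ℤ` because otherwise
`den (tr A) ^ n · tr (A ^ n)` is a Lucas `V`-sequence none of whose terms is divisible by a prime
factor of `den (tr A)`. Cayley–Hamilton then gives `A ^ (n + 1) = U (n + 1) A - det A · U n · 1`
for `U = U(tr A, det A)`, so `S(A) = L(tr A, det A, 1 / lcm of the denominators of the entries)`.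
-/

theorem Nat.exists_two_le_dvd_of_sub_mem {D : Set ℕ}
    (hD : ∀ m n, m + n ∈ D → n ∈ D → m ∈ D) (h₁ : 1 ∉ D) : ∃ d, 2 ≤ d ∧ ∀ n ∈ D, d ∣ n := by
  by_cases hpos : ∃ r, 0 < r ∧ r ∈ D
  · classical
    obtain ⟨hr₀, hr⟩ := Nat.find_spec hpos
    refine ⟨Nat.find hpos, ?_, fun n hn => ?_⟩
    · have : Nat.find hpos ≠ 1 := fun h => h₁ (h ▸ hr)
      omega
    induction n using Nat.strong_induction_on with
    | _ n ih =>
      rcases Nat.eq_zero_or_pos n with rfl | hn₀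
      · exact dvd_zero _
      have hle : Nat.find hpos ≤ n := Nat.find_min' hpos ⟨hn₀, hn⟩
      have hsub := ih (n - Nat.find hpos) (by omega) (hD _ _ (by rwa [Nat.sub_add_cancel hle]) hr)
      simpa [Nat.sub_add_cancel hle] using Nat.dvd_add hsub (dvd_refl (Nat.find hpos))
  · push Not at hpos
    refine ⟨2, le_rfl, fun n hn => ?_⟩
    obtain rfl : n = 0 := by by_contra h; exact hpos n (Nat.pos_of_ne_zero h) hn
    exact dvd_zero 2

theorem pow_dvd_pow_mul_iff {α : Type*} [CommMonoidWithZero α] [IsCancelMulZero α] {p x : α}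
    (hp : p ≠ 0) {v k : ℕ} : p ^ v ∣ p ^ k * x ↔ p ^ (v - k) ∣ x := by
  rcases le_total v k with h | h
  · simp [Nat.sub_eq_zero_of_le h, (pow_dvd_pow p h).mul_right x]
  · rw [← Nat.add_sub_cancel' h, pow_add, Nat.add_sub_cancel_left,
      mul_dvd_mul_iff_left (pow_ne_zero k hp)]

theorem lucasU_add_two (P Q : ℤ) (n : ℕ) :
    lucasU P Q (n + 2) = P * lucasU P Q (n + 1) - Q * lucasU P Q n := rfl

theorem lucasU_docagne (P Q : ℤ) (m n : ℕ) :
    lucasU P Q (m + n) * lucasU P Q (n + 1) - lucasU P Q (m + n + 1) * lucasU P Q n =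
      Q ^ n * lucasU P Q m := by
  induction n with
  | zero => simp [lucasU]
  | succ n ih =>
    rw [← add_assoc, lucasU_add_two P Q n, lucasU_add_two P Q (m + n), pow_succ']
    linear_combination Q * ih

theorem lucasU_mul_sq_succ (t P Q : ℤ) (n : ℕ) :
    lucasU (t * P) (t ^ 2 * Q) (n + 1) = t ^ n * lucasU P Q (n + 1) := by
  induction n using Nat.twoStepInduction with
  | zero => simp [lucasU]
  | one => simp [lucasU]
  | more n ih₀ ih₁ =>
    rw [show n + 1 + 1 + 1 = n + 1 + 2 from rfl, lucasU_add_two, lucasU_add_two P Q, ih₀, ih₁]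
    ring

theorem not_dvd_succ_of_recurrence {x : ℕ → ℤ} {p c d : ℤ} (hp : Prime p)
    (hx : ∀ n, x (n + 2) = c * x (n + 1) - d * x n) (hc : ¬ p ∣ c) (hd : p ∣ d)
    (h₁ : ¬ p ∣ x 1) (n : ℕ) : ¬ p ∣ x (n + 1) := by
  induction n with
  | zero => exact h₁
  | succ n ih =>
    rw [hx]
    intro h
    have : p ∣ c * x (n + 1) := by simpa using dvd_add h (hd.mul_right (x n))
    exact (hp.dvd_or_dvd this).elim hc ih

section Divisibility

variable {P Q p : ℤ}

theorem dvd_lucasU_of_dvd_lucasU_add (hpQ : IsCoprime p Q) {m n : ℕ}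
    (hmn : p ∣ lucasU P Q (m + n)) (hn : p ∣ lucasU P Q n) : p ∣ lucasU P Q m := by
  have : p ∣ Q ^ n * lucasU P Q m := by
    rw [← lucasU_docagne]
    exact dvd_sub (hmn.mul_right _) (hn.mul_left _)
  exact hpQ.pow_right.dvd_of_dvd_mul_left this

theorem not_dvd_lucasU_succ (hp : Prime p) (hP : ¬ p ∣ P) (hQ : p ∣ Q) (n : ℕ) :
    ¬ p ∣ lucasU P Q (n + 1) :=
  not_dvd_succ_of_recurrence hp (lucasU_add_two P Q) hP hQ hp.not_dvd_one n

theorem pow_half_dvd_lucasU (hP : p ∣ P) (hQ : p ∣ Q) (n : ℕ) : p ^ (n / 2) ∣ lucasU P Q n := by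
  induction n using Nat.twoStepInduction with
  | zero => simp
  | one => simp
  | more n ih₀ ih₁ =>
    rw [lucasU_add_two, show (n + 2) / 2 = n / 2 + 1 by omega, pow_succ']
    exact dvd_sub (mul_dvd_mul hP ((pow_dvd_pow p (by omega)).trans ih₁)) (mul_dvd_mul hQ ih₀)

theorem not_pow_succ_dvd_lucasU_odd (hp : Prime p) (hP : p ∣ P) (hQ : p ∣ Q) (hQ₂ : ¬ p ^ 2 ∣ Q)
    (m : ℕ) : ¬ p ^ (m + 1) ∣ lucasU P Q (2 * m + 1) := by
  induction m with
  | zero => simpa [lucasU] using hp.not_dvd_one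
  | succ m ih =>
    obtain ⟨u, rfl⟩ := hQ
    have hu : IsCoprime (p ^ (m + 1)) u :=
      (hp.coprime_iff_not_dvd.mpr fun h => hQ₂ (by rw [sq]; exact mul_dvd_mul_left p h)).pow_left
    have hP' : p ^ (m + 2) ∣ P * lucasU P (p * u) (2 * m + 1 + 1) := by
      have h := pow_half_dvd_lucasU hP (dvd_mul_right p u) (2 * m + 1 + 1)
      rw [show (2 * m + 1 + 1) / 2 = m + 1 by omega] at h
      rw [pow_succ']
      exact mul_dvd_mul hP h
    intro h
    rw [show 2 * (m + 1) + 1 = 2 * m + 1 + 2 by ring, lucasU_add_two, dvd_sub_right hP',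
      pow_succ', mul_assoc, mul_dvd_mul_iff_left hp.ne_zero] at h
    exact ih (hu.dvd_of_dvd_mul_left h)

theorem exists_eq_pow_mul_of_prime (hp : Prime p) (hPQ : P ≠ 0 ∨ Q ≠ 0) :
    ∃ (a : ℕ) (P' Q' : ℤ), P = p ^ a * P' ∧ Q = (p ^ a) ^ 2 * Q' ∧ ¬ (p ∣ P' ∧ p ^ 2 ∣ Q') := by
  induction hs : P.natAbs + Q.natAbs using Nat.strong_induction_on generalizing P Q with
  | _ s ih =>
    by_cases hd : p ∣ P ∧ p ^ 2 ∣ Q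
    · obtain ⟨⟨P₁, rfl⟩, Q₁, rfl⟩ := hd
      have hp₂ : 2 ≤ p.natAbs := (Int.prime_iff_natAbs_prime.mp hp).two_le
      have hPQ₁ : P₁ ≠ 0 ∨ Q₁ ≠ 0 := hPQ.imp right_ne_zero_of_mul right_ne_zero_of_mul
      have hlt : P₁.natAbs + Q₁.natAbs < s := by
        rw [← hs, Int.natAbs_mul, Int.natAbs_mul, Int.natAbs_pow]
        have h₁ := Nat.mul_le_mul_right P₁.natAbs hp₂
        have h₂ := Nat.mul_le_mul_right Q₁.natAbs (hp₂.trans (Nat.le_self_pow two_ne_zero _))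
        rcases hPQ₁ with h | h <;> have := Int.natAbs_pos.mpr h <;> omega
      obtain ⟨a, P', Q', rfl, rfl, hred⟩ := ih _ hlt hPQ₁ rfl
      exact ⟨a + 1, P', Q', by ring, by ring, hred⟩
    · exact ⟨0, P, Q, by simp, by simp, hd⟩

theorem pow_dvd_lucasU_iff (hp : p ≠ 0) {a : ℕ} {P' Q' : ℤ} (hP : P = p ^ a * P')
    (hQ : Q = (p ^ a) ^ 2 * Q') (v n : ℕ) :
    p ^ v ∣ lucasU P Q n ↔ p ^ (v - a * (n - 1)) ∣ lucasU P' Q' n := by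
  cases n with
  | zero => simp [lucasU]
  | succ n => rw [hP, hQ, lucasU_mul_sq_succ, ← pow_mul, pow_dvd_pow_mul_iff hp, Nat.add_sub_cancel]

variable {e : ℕ → ℕ} {g : ℕ}

theorem exists_two_le_dvd_of_isCoprime (he : Antitone e) (hpQ : IsCoprime p Q)
    (hg : ¬ p ^ e g ∣ lucasU P Q g) :
    ∃ d, 2 ≤ d ∧ ∀ n, 0 < n → n < g → p ^ e n ∣ lucasU P Q n → d ∣ n := by
  obtain ⟨d, hd, hdvd⟩ := Nat.exists_two_le_dvd_of_sub_mem (D := {n | p ^ e g ∣ lucasU P Q n})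
    (fun m n => dvd_lucasU_of_dvd_lucasU_add hpQ.pow_left)
    (fun h => hg (isUnit_of_dvd_one h).dvd)
  exact ⟨d, hd, fun n _ hng hn => hdvd n ((pow_dvd_pow p (he hng.le)).trans hn)⟩

theorem exists_two_le_dvd_of_not_dvd (he : Antitone e) (hp : Prime p) (hP : ¬ p ∣ P)
    (hQ : p ∣ Q) (hg : ¬ p ^ e g ∣ lucasU P Q g) :
    ∃ d, 2 ≤ d ∧ ∀ n, 0 < n → n < g → p ^ e n ∣ lucasU P Q n → d ∣ n := by
  refine ⟨2, le_rfl, fun n hn₀ hng hn => absurd ?_ hg⟩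
  obtain ⟨n, rfl⟩ : ∃ k, n = k + 1 := ⟨n - 1, by omega⟩
  have hen : e (n + 1) = 0 := by
    by_contra h
    exact not_dvd_lucasU_succ hp hP hQ n ((dvd_pow_self p h).trans hn)
  simp [Nat.eq_zero_of_le_zero (hen ▸ he hng.le)]

theorem exists_two_le_dvd_of_dvd_of_not_sq_dvd (he : Antitone e) (hp : Prime p) (hP : p ∣ P)
    (hQ : p ∣ Q) (hQ₂ : ¬ p ^ 2 ∣ Q) (hg : ¬ p ^ e g ∣ lucasU P Q g) :
    ∃ d, 2 ≤ d ∧ ∀ n, 0 < n → n < g → p ^ e n ∣ lucasU P Q n → d ∣ n := by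
  refine ⟨2, le_rfl, fun n _ hng hn => ?_⟩
  have heg : g / 2 < e g := by
    by_contra h
    exact hg ((pow_dvd_pow p (not_lt.mp h)).trans (pow_half_dvd_lucasU hP hQ g))
  by_contra hodd
  obtain ⟨m, rfl⟩ : ∃ m, n = 2 * m + 1 := ⟨n / 2, by omega⟩
  have hen : e (2 * m + 1) ≤ m := by
    by_contra h
    exact not_pow_succ_dvd_lucasU_odd hp hP hQ hQ₂ m ((pow_dvd_pow p (by omega)).trans hn)
  have := he hng.le
  omega

theorem exists_two_le_dvd_of_not_pow_dvd_lucasU (hp : Prime p) {v : ℕ}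
    (hg : ¬ p ^ v ∣ lucasU P Q g) :
    ∃ d, 2 ≤ d ∧ ∀ n, 0 < n → n < g → p ^ v ∣ lucasU P Q n → d ∣ n := by
  by_cases h₀ : P = 0 ∧ Q = 0
  · obtain ⟨rfl, rfl⟩ := h₀
    have hg₁ : g ≤ 1 := by
      by_contra h
      obtain ⟨k, rfl⟩ : ∃ k, g = k + 2 := ⟨g - 2, by omega⟩
      exact hg (by simp [lucasU_add_two])
    exact ⟨2, le_rfl, fun n hn₀ hng _ => by omega⟩
  obtain ⟨a, P', Q', hP, hQ, hred⟩ := exists_eq_pow_mul_of_prime hp (not_and_or.mp h₀)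
  have he : Antitone fun n => v - a * (n - 1) := fun m n h =>
    Nat.sub_le_sub_left (Nat.mul_le_mul_left a (Nat.sub_le_sub_right h 1)) v
  simp only [pow_dvd_lucasU_iff hp.ne_zero hP hQ] at hg ⊢
  by_cases hQ' : p ∣ Q'
  · by_cases hP' : p ∣ P'
    · exact exists_two_le_dvd_of_dvd_of_not_sq_dvd he hp hP' hQ' (fun h => hred ⟨hP', h⟩) hg
    · exact exists_two_le_dvd_of_not_dvd he hp hP' hQ' hg
  · exact exists_two_le_dvd_of_isCoprime he (hp.coprime_iff_not_dvd.mpr hQ') hg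

end Divisibility

theorem exists_two_le_dvd_of_not_dvd_lucasU {P Q k : ℤ} {g : ℕ} (hg : ¬ k ∣ lucasU P Q g) :
    ∃ d, 2 ≤ d ∧ ∀ n, 0 < n → n < g → k ∣ lucasU P Q n → d ∣ n := by
  rw [← Int.natAbs_dvd_natAbs, Nat.dvd_iff_prime_pow_dvd_dvd] at hg
  push Not at hg
  obtain ⟨p, v, hp, hpk, hpg⟩ := hg
  have hpg' : ¬ (p : ℤ) ^ v ∣ lucasU P Q g := by exact_mod_cast Int.natCast_dvd.not.mpr hpg
  obtain ⟨d, hd, hdvd⟩ :=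
    exists_two_le_dvd_of_not_pow_dvd_lucasU (Nat.prime_iff_prime_int.mp hp) hpg'
  refine ⟨d, hd, fun n hn₀ hng hn => hdvd n hn₀ hng (Dvd.dvd.trans ?_ hn)⟩
  exact_mod_cast Int.natCast_dvd.mpr hpk

theorem exists_intCast_eq_mul_iff (u : ℤ) (x : ℚ) :
    (∃ k : ℤ, (u : ℚ) * x = k) ↔ (x.den : ℤ) ∣ u := by
  constructor
  · rintro ⟨k, hk⟩
    have : (x.den : ℤ) ∣ u * x.num := ⟨k, by
      have := congrArg (· * (x.den : ℚ)) hk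
      simp only [mul_assoc, Rat.mul_den_eq_num] at this
      exact_mod_cast this.trans (mul_comm _ _)⟩
    exact x.isCoprime_num_den.symm.dvd_of_dvd_mul_right this
  · rintro ⟨t, rfl⟩
    refine ⟨t * x.num, ?_⟩
    push_cast
    rw [← Rat.mul_den_eq_num]
    ring

theorem mem_lucasSG_iff {P Q : ℤ} {R : ℚ} {n : ℕ} :
    n ∈ lucasSG P Q R ↔ (R.den : ℤ) ∣ lucasU P Q n :=
  exists_intCast_eq_mul_iff _ _

theorem smallElems_eq_empty_or_frobNum_notMem {S : Set ℕ} (hS : Sᶜ.Finite) :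
    smallElems S = ∅ ∨ frobNum S ∉ S := by
  rcases Sᶜ.eq_empty_or_nonempty with h | h
  · left
    ext n
    simp [smallElems, frobNum, h]
  · exact Or.inr (h.csSup_mem hS)

theorem mem_of_frobNum_lt {S : Set ℕ} (hS : Sᶜ.Finite) {n : ℕ} (hn : frobNum S < n) : n ∈ S := by
  by_contra h
  exact (le_csSup hS.bddAbove h).not_gt hn

theorem smallElems_lucasSG {P Q : ℤ} {R : ℚ} (hfin : (lucasSG P Q R)ᶜ.Finite) :
    smallElems (lucasSG P Q R) = ∅ ∨
      ∃ d : ℕ, 2 ≤ d ∧ ∀ n ∈ smallElems (lucasSG P Q R), d ∣ n := by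
  refine (smallElems_eq_empty_or_frobNum_notMem hfin).imp_right fun hg => ?_
  obtain ⟨d, hd, hdvd⟩ := exists_two_le_dvd_of_not_dvd_lucasU (mem_lucasSG_iff.not.mp hg)
  exact ⟨d, hd, fun n ⟨hn, hn₀, hng⟩ => hdvd n hn₀ hng (mem_lucasSG_iff.mp hn)⟩

def lucasV (P Q : ℤ) : ℕ → ℤ
  | 0 => 2
  | 1 => P
  | n + 2 => P * lucasV P Q (n + 1) - Q * lucasV P Q n

namespace Matrix

variable {R : Type*} [CommRing R]

theorem sq_fin_two (A : Matrix (Fin 2) (Fin 2) R) : A ^ 2 = A.trace • A - A.det • 1 := by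
  ext i j
  fin_cases i <;> fin_cases j <;>
    simp [sq, mul_apply, trace_fin_two, det_fin_two] <;> ring

theorem trace_pow_add_two_fin_two (A : Matrix (Fin 2) (Fin 2) R) (n : ℕ) :
    (A ^ (n + 2)).trace = A.trace * (A ^ (n + 1)).trace - A.det * (A ^ n).trace := by
  rw [pow_add, sq_fin_two, Matrix.mul_sub, Matrix.mul_smul, Matrix.mul_smul, mul_one, ← pow_succ,
    trace_sub, trace_smul, trace_smul, smul_eq_mul, smul_eq_mul]

theorem pow_succ_fin_two_eq_lucasU (A : Matrix (Fin 2) (Fin 2) R) {P Q : ℤ} (hP : A.trace = P)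
    (hQ : A.det = Q) (n : ℕ) :
    A ^ (n + 1) = (lucasU P Q (n + 1) : R) • A - ((Q * lucasU P Q n : ℤ) : R) • 1 := by
  induction n with
  | zero => simp [lucasU]
  | succ n ih =>
    rw [pow_succ, ih, sub_mul, smul_mul, smul_mul, one_mul, ← sq, sq_fin_two, hP, hQ,
      lucasU_add_two]
    push_cast
    module

theorem den_pow_mul_trace_pow_eq_lucasV (A : Matrix (Fin 2) (Fin 2) ℚ) {q : ℤ} (hq : A.det = q)
    (n : ℕ) :
    (lucasV A.trace.num (q * A.trace.den ^ 2) n : ℚ) = A.trace.den ^ n * (A ^ n).trace := by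
  induction n using Nat.twoStepInduction with
  | zero => simp [lucasV]
  | one => simp [lucasV, mul_comm, Rat.mul_den_eq_num]
  | more n ih₀ ih₁ =>
    rw [lucasV, Int.cast_sub, Int.cast_mul, Int.cast_mul, ih₀, ih₁, trace_pow_add_two_fin_two, hq,
      ← Rat.mul_den_eq_num]
    push_cast
    ring

theorem exists_map_intCast_eq_pow {d N : ℕ} {A : Matrix (Fin d) (Fin d) ℚ} (hN : N ∈ expSG A) :
    ∃ M : Matrix (Fin d) (Fin d) ℤ, M.map (↑) = A ^ N := by
  choose M hM using hN
  exact ⟨of M, by ext i j; exact (hM i j).symm⟩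

theorem den_det_eq_one {A : Matrix (Fin 2) (Fin 2) ℚ} {N : ℕ} (hN₀ : N ≠ 0) (hN : N ∈ expSG A) :
    A.det.den = 1 := by
  obtain ⟨M, hM⟩ := exists_map_intCast_eq_pow hN
  have : A.det.den ^ N = 1 := by
    rw [← Rat.den_pow, ← det_pow, ← hM, ← Int.cast_det, Rat.den_intCast]
  exact (pow_eq_one_iff.mp this).resolve_right hN₀

theorem den_trace_eq_one {A : Matrix (Fin 2) (Fin 2) ℚ} {q : ℤ} (hq : A.det = q) {N : ℕ}
    (hN₀ : N ≠ 0) (hN : N ∈ expSG A) : A.trace.den = 1 := by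
  obtain ⟨M, hM⟩ := exists_map_intCast_eq_pow hN
  by_contra he
  obtain ⟨p, hp, hpe⟩ := Nat.exists_prime_and_dvd he
  have hp' := Nat.prime_iff_prime_int.mp hp
  have hpe' : (p : ℤ) ∣ A.trace.den := Int.natCast_dvd_natCast.mpr hpe
  have hpc : ¬ (p : ℤ) ∣ A.trace.num := fun h =>
    hp'.not_isUnit (A.trace.isCoprime_num_den.isUnit_of_dvd' h hpe')
  have hV : lucasV A.trace.num (q * A.trace.den ^ 2) N = A.trace.den ^ N * M.trace := by
    have hM' : ((M.trace : ℤ) : ℚ) = (M.map (↑)).trace :=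
      AddMonoidHom.map_trace (Int.castAddHom ℚ) M
    have := den_pow_mul_trace_pow_eq_lucasV A hq N
    rw [← hM, ← hM'] at this
    exact_mod_cast this
  obtain ⟨n, rfl⟩ := Nat.exists_eq_succ_of_ne_zero hN₀
  refine not_dvd_succ_of_recurrence (x := lucasV A.trace.num _) hp' (fun n => rfl) hpc
    ((dvd_pow hpe' two_ne_zero).mul_left q) hpc n ?_
  rw [hV]
  exact (dvd_pow hpe' n.succ_ne_zero).mul_right _

end Matrix

theorem exists_lucasSG_eq_expSG {A : Matrix (Fin 2) (Fin 2) ℚ} {N : ℕ} (hN₀ : N ≠ 0)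
    (hN : N ∈ expSG A) : ∃ P Q R, lucasSG P Q R = expSG A := by
  obtain ⟨q, hq⟩ : ∃ q : ℤ, A.det = q :=
    ⟨_, ((Rat.den_eq_one_iff _).mp (Matrix.den_det_eq_one hN₀ hN)).symm⟩
  obtain ⟨c, hc⟩ : ∃ c : ℤ, A.trace = c :=
    ⟨_, ((Rat.den_eq_one_iff _).mp (Matrix.den_trace_eq_one hq hN₀ hN)).symm⟩
  set L := Finset.univ.lcm fun ij : Fin 2 × Fin 2 => (A ij.1 ij.2).den
  have hL : L ≠ 0 := by simp [L, Finset.lcm_eq_zero_iff]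
  have hshift (x : ℚ) (m : ℤ) : (∃ k : ℤ, x - m = k) ↔ ∃ k : ℤ, x = k :=
    ⟨fun ⟨k, hk⟩ => ⟨k + m, by push_cast; linarith⟩, fun ⟨k, hk⟩ => ⟨k - m, by push_cast; linarith⟩⟩
  refine ⟨c, q, (L : ℚ)⁻¹, Set.ext fun n => ?_⟩
  cases n with
  | zero =>
    refine iff_of_true ⟨0, by simp [lucasU]⟩ fun i j => ⟨(1 : Matrix (Fin 2) (Fin 2) ℤ) i j, ?_⟩
    rw [pow_zero, ← Matrix.map_one _ Int.cast_zero Int.cast_one, Matrix.map_apply]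
  | succ n =>
    have hentry (i j : Fin 2) : (A ^ (n + 1)) i j = lucasU c q (n + 1) * A i j -
        ((q * lucasU c q n * (1 : Matrix (Fin 2) (Fin 2) ℤ) i j : ℤ) : ℚ) := by
      rw [Matrix.pow_succ_fin_two_eq_lucasU A hc hq]
      simp only [Matrix.sub_apply, Matrix.smul_apply, Matrix.one_apply, smul_eq_mul]
      split_ifs <;> simp
    change _ ↔ ∀ i j, ∃ k : ℤ, (A ^ (n + 1)) i j = k
    rw [mem_lucasSG_iff, Rat.inv_natCast_den, if_neg hL, Int.natCast_dvd, Finset.lcm_dvd_iff]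
    simp only [hentry, hshift, exists_intCast_eq_mul_iff, Int.natCast_dvd, Finset.mem_univ,
      true_implies, Prod.forall]

/-- If a Lucas semigroup `S = L(P,Q,R)` is numerical (has finite complement),
then `s(S) = ∅` or some `d ≥ 2` divides every nonzero small element of `S`.
Consequently, a numerical semigroup `T` with `s(T) ≠ ∅` and `gcd s(T) = 1`
(no `d ≥ 2` divides all of `s(T)`) is not the exponent semigroup of any `2×2`
rational matrix. -/
theorem lucasSG_small_gcd (P Q : ℤ) (R : ℚ)
    (hfin : (lucasSG P Q R)ᶜ.Finite) :
    (smallElems (lucasSG P Q R) = ∅ ∨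
      ∃ d : ℕ, 2 ≤ d ∧ ∀ n ∈ smallElems (lucasSG P Q R), d ∣ n) ∧
    ∀ T : Set ℕ, 0 ∈ T → (∀ m n : ℕ, m ∈ T → n ∈ T → m + n ∈ T) →
      Tᶜ.Finite → smallElems T ≠ ∅ →
      (¬ ∃ d : ℕ, 2 ≤ d ∧ ∀ n ∈ smallElems T, d ∣ n) →
      ¬ ∃ A : Matrix (Fin 2) (Fin 2) ℚ, expSG A = T := by
  refine ⟨smallElems_lucasSG hfin, ?_⟩
  rintro T - - hT hne hgcd ⟨A, rfl⟩
  obtain ⟨P', Q', R', hA⟩ :=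
    exists_lucasSG_eq_expSG (Nat.succ_ne_zero _) (mem_of_frobNum_lt hT (Nat.lt_succ_self _))
  rw [← hA] at hT hne hgcd
  exact (smallElems_lucasSG hT).elim hne hgcd
end
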